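/- arXiv:2001.05903 — 2 statements merged into one kernel-verified Lean document; each statement's English description precedes it below -/
import Mathlib

section
/- Failure of strong type (1,q) embedding estimates (Theorem 6.1, negative strong part): Let d ≥ 1 and ε > 0. For every 1 ≤ q < ∞ and every 0 < r ≤ ∞, the function f = 1_{(−1,1)^d} ∈ L^1(ℝ^d) satisfies ‖t^{d − d/q} F(f)‖_{L^q(ℓ^r)} = ∞. In particular no constant C exists such that ‖t^{d − d/q} F(f)‖_{L^q(ℓ^r)} ≤ C ‖f‖_{L^1(ℝ^d)} for all f ∈ L^1(ℝ^d). -/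
open MeasureTheory Set
open scoped ENNReal

noncomputable section

/-- The outer `ℓ^r` size associated with an outer measure `μ` and a Borel measure `ν`:
for `r < ∞`, `ℓ^r(f)(A) = (μ(A)⁻¹ ∫_A f^r dν)^{1/r}`; for `r = ∞` the `ν`-essential
supremum of `f` on `A`. -/
def ellSize {X : Type*} [MeasurableSpace X] (μ : Set X → ℝ≥0∞) (ν : MeasureTheory.Measure X)
    (r : ℝ≥0∞) (f : X → ℝ≥0∞) (A : Set X) : ℝ≥0∞ :=
  if r = ∞ then essSup f (ν.restrict A)
  else ((μ A)⁻¹ * ∫⁻ x in A, f x ^ r.toReal ∂ν) ^ r.toReal⁻¹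

/-- The outer `L^∞(ℓ^r)` quasi-norm: supremum of the size over Borel sets. -/
def outerSup {X : Type*} [MeasurableSpace X] (μ : Set X → ℝ≥0∞) (ν : MeasureTheory.Measure X)
    (r : ℝ≥0∞) (f : X → ℝ≥0∞) : ℝ≥0∞ :=
  ⨆ (A : Set X) (_ : MeasurableSet A), ellSize μ ν r f A

/-- The super level measure `μ(ℓ^r(f) > λ)`. -/
def superLevel {X : Type*} [MeasurableSpace X] (μ : Set X → ℝ≥0∞) (ν : MeasureTheory.Measure X)
    (r : ℝ≥0∞) (f : X → ℝ≥0∞) (lam : ℝ≥0∞) : ℝ≥0∞ :=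
  ⨅ (A : Set X) (_ : MeasurableSet A)
    (_ : outerSup μ ν r (Aᶜ.indicator f) ≤ lam), μ A

/-- The outer `L^p(ℓ^r)` quasi-norm,
`‖f‖_{L^p(ℓ^r)} = (∫_0^∞ p λ^{p-1} μ(ℓ^r(f) > λ) dλ)^{1/p}` for `p < ∞`. -/
def outerLp {X : Type*} [MeasurableSpace X] (μ : Set X → ℝ≥0∞) (ν : MeasureTheory.Measure X)
    (p r : ℝ≥0∞) (f : X → ℝ≥0∞) : ℝ≥0∞ :=
  if p = ∞ then outerSup μ ν r f
  else (∫⁻ l in Ioi (0:ℝ),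
      ENNReal.ofReal (p.toReal * l ^ (p.toReal - 1)) *
        superLevel μ ν r f (ENNReal.ofReal l)) ^ p.toReal⁻¹

/-- The weak outer `L^{p,∞}(ℓ^r)` quasi-norm,
`‖f‖_{L^{p,∞}(ℓ^r)} = (sup_{λ>0} λ^p μ(ℓ^r(f) > λ))^{1/p}` for `p < ∞`. -/
def outerLpWeak {X : Type*} [MeasurableSpace X] (μ : Set X → ℝ≥0∞) (ν : MeasureTheory.Measure X)
    (p r : ℝ≥0∞) (f : X → ℝ≥0∞) : ℝ≥0∞ :=
  if p = ∞ then outerSup μ ν r f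
  else (⨆ (lam : ℝ≥0∞) (_ : 0 < lam), lam ^ p.toReal * superLevel μ ν r f lam) ^ p.toReal⁻¹

/-- The upper half space `ℝ^d × ℝ` (only the part `t > 0` carries mass). -/
abbrev UHS (d : ℕ) : Type := (Fin d → ℝ) × ℝ

/-- The measure `t⁻¹ dy dt` on the upper half space (vanishing on `{t ≤ 0}`). -/
def uhsMeasure (d : ℕ) : MeasureTheory.Measure (UHS d) :=
  (MeasureTheory.volume : MeasureTheory.Measure (Fin d → ℝ)).prod
    (MeasureTheory.volume.withDensity fun t => ENNReal.ofReal t⁻¹)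

/-- The open box `(x,0) + (0,s)^{d+1}` over `x ∈ ℝ^d` with side `s`. -/
def cbox (d : ℕ) (x : Fin d → ℝ) (s : ℝ) : Set (UHS d) :=
  {q | (∀ i, q.1 i ∈ Ioo (x i) (x i + s)) ∧ q.2 ∈ Ioo 0 s}

/-- The outer measure on the upper half space generated by covering with boxes,
`μ(A) = inf { Σ σ(E) : A ⊆ ∪ E }` where `σ(E) = s^d` is the volume of the base. -/
def boxOuter (d : ℕ) (A : Set (UHS d)) : ℝ≥0∞ :=
  ⨅ (C : Set ((Fin d → ℝ) × ℝ)) (_ : C.Countable) (_ : ∀ e ∈ C, 0 < e.2)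
    (_ : A ⊆ ⋃ e ∈ C, cbox d e.1 e.2),
    ∑' e : C, ENNReal.ofReal (e.1.2 ^ d)

/-- The Euclidean distance on `ℝ^d` realized as `Fin d → ℝ`. -/
def eudist {d : ℕ} (x y : Fin d → ℝ) : ℝ := Real.sqrt (∑ i, (x i - y i) ^ 2)

/-- The maximal embedded function
`F(f)(y,t) = ∫_{ℝ^d} |f(x)| t^{-d} (1 + t⁻¹|y−x|)^{-d-ε} dx` on the upper half space. -/
def embF (d : ℕ) (ε : ℝ) (f : (Fin d → ℝ) → ℝ) (w : UHS d) : ℝ≥0∞ :=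
  ∫⁻ x, ENNReal.ofReal (|f x| * w.2 ^ (-(d:ℝ)) * (1 + w.2⁻¹ * eudist w.1 x) ^ (-(d:ℝ) - ε))

lemma lintegral_inv_Ioo_top (s : ℝ) (hs : 0 < s) :
    ∫⁻ l in Ioo (0:ℝ) s, ENNReal.ofReal l⁻¹ = ∞ := by
  by_contra h
  have hfin : ∫⁻ l in Ioo (0:ℝ) s, ENNReal.ofReal l⁻¹ < ∞ := lt_top_iff_ne_top.2 h
  have hint : IntegrableOn (fun l : ℝ => l⁻¹) (Ioo 0 s) := by
    constructor
    · exact (measurable_inv.aestronglyMeasurable)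
    · rw [hasFiniteIntegral_iff_ofReal]
      · exact hfin
      · filter_upwards [ae_restrict_mem measurableSet_Ioo] with x hx
        exact inv_nonneg.2 hx.1.le
  have h2 : IntegrableOn (fun l : ℝ => l ^ (-1:ℝ)) (Ioo 0 s) := by
    apply hint.congr_fun ?_ measurableSet_Ioo
    intro x hx
    simp only []
    rw [Real.rpow_neg_one]
  rw [intervalIntegral.integrableOn_Ioo_rpow_iff hs] at h2
  linarith
-- volume of the open box base
lemma volume_base_box (d : ℕ) (x : Fin d → ℝ) (s : ℝ) (hs : 0 ≤ s) :
    volume {y : Fin d → ℝ | ∀ i, y i ∈ Ioo (x i) (x i + s)} = ENNReal.ofReal (s ^ d) := by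
  have h : {y : Fin d → ℝ | ∀ i, y i ∈ Ioo (x i) (x i + s)}
      = Set.pi univ (fun i => Ioo (x i) (x i + s)) := by
    ext y; simp [Set.mem_pi]
  rw [h, volume_pi_pi]
  simp only [Real.volume_Ioo, add_sub_cancel_left]
  rw [Finset.prod_const, Finset.card_univ, Fintype.card_fin, ← ENNReal.ofReal_pow hs]

-- slice of a cbox
lemma slice_cbox_le (d : ℕ) (x : Fin d → ℝ) (s t : ℝ) (hs : 0 ≤ s) :
    volume {y : Fin d → ℝ | (y, t) ∈ cbox d x s} ≤ ENNReal.ofReal (s ^ d) := by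
  by_cases ht : t ∈ Ioo 0 s
  · have h : {y : Fin d → ℝ | (y, t) ∈ cbox d x s}
        = {y : Fin d → ℝ | ∀ i, y i ∈ Ioo (x i) (x i + s)} := by
      ext y
      simp only [cbox, mem_setOf_eq, mem_Ioo] at *
      exact ⟨fun h => fun i => h.1 i, fun h => ⟨fun i => h i, ht⟩⟩
    rw [h, volume_base_box d x s hs]
  · have h : {y : Fin d → ℝ | (y, t) ∈ cbox d x s} = ∅ := by
      ext y; simp only [cbox, mem_setOf_eq, mem_Ioo, mem_empty_iff_false, iff_false] at *; tauto
    simp [h]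

-- slice lemma
lemma slice_le_boxOuter (d : ℕ) (A : Set (UHS d)) (t : ℝ) :
    volume {y : Fin d → ℝ | (y, t) ∈ A} ≤ boxOuter d A := by
  rw [boxOuter]
  refine le_iInf fun C => le_iInf fun hC => le_iInf fun hpos => le_iInf fun hcov => ?_
  have hsub : {y : Fin d → ℝ | (y, t) ∈ A} ⊆ ⋃ e ∈ C, {y : Fin d → ℝ | (y, t) ∈ cbox d e.1 e.2} := by
    intro y hy
    rcases mem_iUnion₂.1 (hcov hy) with ⟨e, he, hye⟩
    exact mem_iUnion₂.2 ⟨e, he, hye⟩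
  calc volume {y : Fin d → ℝ | (y, t) ∈ A}
      ≤ volume (⋃ e ∈ C, {y : Fin d → ℝ | (y, t) ∈ cbox d e.1 e.2}) := measure_mono hsub
    _ ≤ ∑' e : C, volume {y : Fin d → ℝ | (y, t) ∈ cbox d (e:((Fin d → ℝ) × ℝ)).1 (e:((Fin d → ℝ) × ℝ)).2} :=
        measure_biUnion_le volume hC _
    _ ≤ ∑' e : C, ENNReal.ofReal ((e:((Fin d → ℝ) × ℝ)).2 ^ d) := by
        refine ENNReal.tsum_le_tsum fun e => slice_cbox_le d _ _ t (hpos e e.2).le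
lemma boxOuter_le_single (d : ℕ) (A : Set (UHS d)) (x : Fin d → ℝ) (s : ℝ) (hs : 0 < s)
    (hA : A ⊆ cbox d x s) : boxOuter d A ≤ ENNReal.ofReal (s ^ d) := by
  rw [boxOuter]
  refine iInf_le_of_le {(x, s)} (iInf_le_of_le (countable_singleton _) ?_)
  refine iInf_le_of_le (by rintro e rfl; exact hs) ?_
  refine iInf_le_of_le ?_ ?_
  · intro w hw
    exact mem_iUnion₂.2 ⟨(x, s), rfl, hA hw⟩
  · exact le_of_eq (tsum_singleton ((x, s) : (Fin d → ℝ) × ℝ) (fun e => ENNReal.ofReal (e.2 ^ d)))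
def wdm : Measure ℝ := volume.withDensity fun t => ENNReal.ofReal t⁻¹

lemma wdm_Ioo_le (T : ℝ) (hT : 0 < T) : wdm (Ioo T (2*T)) ≤ 1 := by
  rw [wdm, withDensity_apply _ measurableSet_Ioo]
  calc ∫⁻ t in Ioo T (2*T), ENNReal.ofReal t⁻¹ ∂volume
      ≤ ∫⁻ _ in Ioo T (2*T), ENNReal.ofReal T⁻¹ ∂volume := by
        refine setLIntegral_mono' measurableSet_Ioo fun t ht => ?_
        exact ENNReal.ofReal_le_ofReal (inv_anti₀ hT ht.1.le)
    _ = ENNReal.ofReal T⁻¹ * volume (Ioo T (2*T)) := setLIntegral_const _ _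
    _ = ENNReal.ofReal T⁻¹ * ENNReal.ofReal T := by rw [Real.volume_Ioo, show 2*T - T = T by ring]
    _ = 1 := by
        rw [← ENNReal.ofReal_mul (by positivity)]
        rw [inv_mul_cancel₀ hT.ne']; simp

lemma wdm_Ioo_ge (T : ℝ) (hT : 0 < T) : ENNReal.ofReal (1/2) ≤ wdm (Ioo T (2*T)) := by
  rw [wdm, withDensity_apply _ measurableSet_Ioo]
  calc ENNReal.ofReal (1/2)
      = ENNReal.ofReal (2*T)⁻¹ * volume (Ioo T (2*T)) := by
        rw [Real.volume_Ioo]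
        rw [← ENNReal.ofReal_mul (by positivity)]
        rw [show 2*T - T = T by ring]
        congr 1
        field_simp
    _ = ∫⁻ _ in Ioo T (2*T), ENNReal.ofReal (2*T)⁻¹ ∂volume := (setLIntegral_const _ _).symm
    _ ≤ ∫⁻ t in Ioo T (2*T), ENNReal.ofReal t⁻¹ ∂volume := by
        refine setLIntegral_mono' measurableSet_Ioo fun t ht => ?_
        exact ENNReal.ofReal_le_ofReal (inv_anti₀ (lt_trans hT ht.1) ht.2.le)
lemma uhs_slab_inter_le (d : ℕ) (A : Set (UHS d)) (hA : MeasurableSet A) (T : ℝ) (hT : 0 < T) :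
    uhsMeasure d (A ∩ (univ ×ˢ Ioo T (2*T))) ≤ boxOuter d A := by
  rw [uhsMeasure]
  rw [Measure.prod_apply_symm (hA.inter (MeasurableSet.univ.prod measurableSet_Ioo))]
  calc ∫⁻ t, volume ((fun y => (y, t)) ⁻¹' (A ∩ (univ ×ˢ Ioo T (2*T))))
        ∂(volume.withDensity fun t => ENNReal.ofReal t⁻¹)
      ≤ ∫⁻ t, (Ioo T (2*T)).indicator (fun _ => boxOuter d A) t
        ∂(volume.withDensity fun t => ENNReal.ofReal t⁻¹) := by
        refine lintegral_mono fun t => ?_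
        by_cases ht : t ∈ Ioo T (2*T)
        · rw [indicator_of_mem ht]
          refine le_trans (measure_mono ?_) (slice_le_boxOuter d A t)
          intro y hy; exact hy.1
        · rw [indicator_of_notMem ht]
          have : (fun y => (y, t)) ⁻¹' (A ∩ (univ ×ˢ Ioo T (2*T))) = ∅ := by
            ext y; simp only [mem_preimage, mem_inter_iff, mem_prod, mem_empty_iff_false, iff_false]
            rintro ⟨-, -, h2⟩; exact ht h2
          simp [this]
    _ = boxOuter d A * wdm (Ioo T (2*T)) := lintegral_indicator_const measurableSet_Ioo _
    _ ≤ boxOuter d A * 1 := mul_le_mul_right (wdm_Ioo_le T hT) _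
    _ = boxOuter d A := mul_one _
lemma measurableSet_S1 (d : ℕ) : MeasurableSet {x : Fin d → ℝ | ∀ i, x i ∈ Ioo (-1:ℝ) 1} := by
  have h : {x : Fin d → ℝ | ∀ i, x i ∈ Ioo (-1:ℝ) 1} = Set.pi univ (fun _ => Ioo (-1:ℝ) 1) := by
    ext y; simp [Set.mem_pi]
  rw [h]
  exact MeasurableSet.pi countable_univ (fun i _ => measurableSet_Ioo)

lemma volume_S1 (d : ℕ) : volume {x : Fin d → ℝ | ∀ i, x i ∈ Ioo (-1:ℝ) 1} = ENNReal.ofReal (2 ^ d) := by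
  have h : {x : Fin d → ℝ | ∀ i, x i ∈ Ioo (-1:ℝ) 1}
      = {x : Fin d → ℝ | ∀ i, x i ∈ Ioo ((fun _ => (-1:ℝ)) i) ((fun _ => (-1:ℝ)) i + 2)} := by
    norm_num
  rw [h, volume_base_box d _ 2 (by norm_num)]

lemma embF_lower (d : ℕ) (ε : ℝ) (hε : 0 < ε) (T : ℝ) (hT : 1 ≤ T) (y : Fin d → ℝ) (t : ℝ)
    (hy : ∀ i, y i ∈ Ioo (-T) T) (ht : t ∈ Ioo T (2*T)) :
    ENNReal.ofReal (t ^ (-(d:ℝ)) * ((1 + 2*Real.sqrt d) ^ (-(d:ℝ)-ε) * 2 ^ d)) ≤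
      embF d ε ({x : Fin d → ℝ | ∀ i, x i ∈ Ioo (-1:ℝ) 1}.indicator fun _ => (1:ℝ)) (y, t) := by
  set S₁ := {x : Fin d → ℝ | ∀ i, x i ∈ Ioo (-1:ℝ) 1} with hS₁
  have ht0 : 0 < t := lt_of_lt_of_le one_pos (le_trans hT ht.1.le)
  have hc₀ : (0:ℝ) < (1 + 2*Real.sqrt d) ^ (-(d:ℝ)-ε) :=
    Real.rpow_pos_of_pos (by positivity) _
  have htd : (0:ℝ) < t ^ (-(d:ℝ)) := Real.rpow_pos_of_pos ht0 _
  rw [embF]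
  calc ENNReal.ofReal (t ^ (-(d:ℝ)) * ((1 + 2*Real.sqrt d) ^ (-(d:ℝ)-ε) * 2 ^ d))
      = ENNReal.ofReal (t ^ (-(d:ℝ)) * (1 + 2*Real.sqrt d) ^ (-(d:ℝ)-ε)) * volume S₁ := by
        rw [volume_S1 d, ← ENNReal.ofReal_mul (by positivity)]
        ring_nf
    _ = ∫⁻ x, S₁.indicator
          (fun _ => ENNReal.ofReal (t ^ (-(d:ℝ)) * (1 + 2*Real.sqrt d) ^ (-(d:ℝ)-ε))) x := by
        rw [lintegral_indicator_const (measurableSet_S1 d)]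
    _ ≤ _ := by
        refine lintegral_mono fun x => ?_
        by_cases hx : x ∈ S₁
        · rw [indicator_of_mem hx]
          rw [indicator_of_mem hx]
          refine ENNReal.ofReal_le_ofReal ?_
          have hdist : eudist y x ≤ Real.sqrt d * (2*t) := by
            rw [eudist]
            have hsum : ∑ i, (y i - x i)^2 ≤ ∑ _i : Fin d, (2*t)^2 := by
              refine Finset.sum_le_sum fun i _ => ?_
              have h1 : |y i - x i| ≤ 2*t := by
                have := hy i; have := hx i
                simp only [mem_Ioo] at *
                rw [abs_le]
                constructor <;> nlinarith [ht.1, hT]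
              calc (y i - x i)^2 = |y i - x i|^2 := (sq_abs _).symm
                _ ≤ (2*t)^2 := by nlinarith [abs_nonneg (y i - x i)]
            calc Real.sqrt (∑ i, (y i - x i)^2) ≤ Real.sqrt (∑ _i : Fin d, (2*t)^2) :=
                  Real.sqrt_le_sqrt hsum
              _ = Real.sqrt (d * (2*t)^2) := by rw [Finset.sum_const, Finset.card_univ,
                    Fintype.card_fin, nsmul_eq_mul]
              _ = Real.sqrt d * (2*t) := by
                  rw [Real.sqrt_mul (by positivity), Real.sqrt_sq (by positivity)]
          have hbase : 1 + t⁻¹ * eudist y x ≤ 1 + 2*Real.sqrt d := by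
            have : t⁻¹ * eudist y x ≤ t⁻¹ * (Real.sqrt d * (2*t)) :=
              mul_le_mul_of_nonneg_left hdist (by positivity)
            have h2 : t⁻¹ * (Real.sqrt d * (2*t)) = 2*Real.sqrt d := by
              field_simp
            linarith [this, h2 ▸ this]
          have hpow : (1 + 2*Real.sqrt d) ^ (-(d:ℝ)-ε) ≤ (1 + t⁻¹ * eudist y x) ^ (-(d:ℝ)-ε) := by
            refine Real.rpow_le_rpow_of_nonpos ?_ hbase (by have : (0:ℝ) ≤ d := Nat.cast_nonneg d; linarith)
            have : 0 ≤ eudist y x := Real.sqrt_nonneg _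
            positivity
          rw [abs_one, one_mul]
          exact mul_le_mul_of_nonneg_left hpow htd.le
        · rw [indicator_of_notMem hx]
          exact zero_le
/-- Abbreviation for the constant `(1+2√d)^(-d-ε) 2^d`. -/
def Pc (d : ℕ) (ε : ℝ) : ℝ := (1 + 2*Real.sqrt d) ^ (-(d:ℝ)-ε) * 2 ^ d

lemma Pc_pos (d : ℕ) (ε : ℝ) : 0 < Pc d ε := by
  have : (0:ℝ) < (1 + 2*Real.sqrt d) ^ (-(d:ℝ)-ε) := Real.rpow_pos_of_pos (by positivity) _
  rw [Pc]; positivity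

lemma g_lower (d : ℕ) (ε : ℝ) (hε : 0 < ε) (a : ℝ) (ha : 0 < a) (T : ℝ) (hT : 1 ≤ T)
    (y : Fin d → ℝ) (t : ℝ) (hy : ∀ i, y i ∈ Ioo (-T) T) (ht : t ∈ Ioo T (2*T)) :
    ENNReal.ofReal ((2*T) ^ (-a) * Pc d ε) ≤
      ENNReal.ofReal (t ^ ((d:ℝ) - a)) *
        embF d ε ({x : Fin d → ℝ | ∀ i, x i ∈ Ioo (-1:ℝ) 1}.indicator fun _ => (1:ℝ)) (y, t) := by
  have ht0 : 0 < t := lt_of_lt_of_le one_pos (le_trans hT ht.1.le)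
  calc ENNReal.ofReal ((2*T) ^ (-a) * Pc d ε)
      ≤ ENNReal.ofReal (t ^ ((d:ℝ) - a) * (t ^ (-(d:ℝ)) * Pc d ε)) := by
        refine ENNReal.ofReal_le_ofReal ?_
        have h1 : t ^ ((d:ℝ) - a) * t ^ (-(d:ℝ)) = t ^ (-a) := by
          rw [← Real.rpow_add ht0]; ring_nf
        rw [← mul_assoc, h1]
        refine mul_le_mul_of_nonneg_right ?_ (Pc_pos d ε).le
        exact Real.rpow_le_rpow_of_nonpos ht0 ht.2.le (by linarith)
    _ = ENNReal.ofReal (t ^ ((d:ℝ) - a)) * ENNReal.ofReal (t ^ (-(d:ℝ)) * Pc d ε) := by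
        rw [← ENNReal.ofReal_mul (Real.rpow_nonneg ht0.le _)]
    _ ≤ _ := by
        refine mul_le_mul_right ?_ _
        exact embF_lower d ε hε T hT y t hy ht
lemma key_lemma (d : ℕ) (hd : 1 ≤ d) (ε : ℝ) (hε : 0 < ε) (q r : ℝ≥0∞)
    (hq : 1 ≤ q) (hq' : q ≠ ∞) (hr : 0 < r) (K : ℝ) (hK : 1 < K)
    (hKr : r ≠ ∞ → K ^ r.toReal = 4)
    (l : ℝ) (hl : 0 < l) (hl₀ : l < Pc d ε / (K * 2 ^ d))
    (A : Set (UHS d)) (hA : MeasurableSet A)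
    (hout : outerSup (boxOuter d) (uhsMeasure d) r
        (Aᶜ.indicator (fun w => ENNReal.ofReal (w.2 ^ ((d:ℝ) - (d:ℝ) / q.toReal)) *
          embF d ε ({x : Fin d → ℝ | ∀ i, x i ∈ Ioo (-1:ℝ) 1}.indicator fun _ => (1:ℝ)) w)) ≤
      ENNReal.ofReal l) :
    ENNReal.ofReal ((Pc d ε / (K * l)) ^ q.toReal * (1/4)) ≤ boxOuter d A := by
  set g : UHS d → ℝ≥0∞ := fun w => ENNReal.ofReal (w.2 ^ ((d:ℝ) - (d:ℝ) / q.toReal)) *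
      embF d ε ({x : Fin d → ℝ | ∀ i, x i ∈ Ioo (-1:ℝ) 1}.indicator fun _ => (1:ℝ)) w with hg
  have hK0 : 0 < K := lt_trans one_pos hK
  have hq1 : (1:ℝ) ≤ q.toReal := by
    have := ENNReal.toReal_mono hq' hq; simpa using this
  have hq0 : 0 < q.toReal := lt_of_lt_of_le one_pos hq1
  set a : ℝ := (d:ℝ) / q.toReal with haa
  have hd0 : (0:ℝ) < d := by exact_mod_cast hd
  have ha : 0 < a := div_pos hd0 hq0
  have had : a ≤ d := by
    rw [haa, div_le_iff₀ hq0]; nlinarith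
  have hPc := Pc_pos d ε
  have hKl : 0 < K * l := mul_pos hK0 hl
  -- the scale T
  set T : ℝ := (Pc d ε / (K*l)) ^ a⁻¹ / 2 with hTdef
  have hPKl : 0 < Pc d ε / (K*l) := div_pos hPc hKl
  have h2T : 2*T = (Pc d ε / (K*l)) ^ a⁻¹ := by rw [hTdef]; ring
  have h2T0 : 0 < 2*T := by rw [h2T]; exact Real.rpow_pos_of_pos hPKl _
  have hT1 : 1 ≤ T := by
    have h2d : (2:ℝ) ^ a ≤ Pc d ε / (K*l) := by
      have h1 : K * l < Pc d ε / 2^d := by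
        rw [lt_div_iff₀ (by positivity)]
        calc K * l * 2^d < K * (Pc d ε / (K * 2^d)) * 2^d := by
              have := mul_lt_mul_of_pos_left hl₀ hK0
              nlinarith [this, (by positivity : (0:ℝ) < (2:ℝ)^d)]
          _ = Pc d ε := by field_simp
      have h2 : (2:ℝ)^d < Pc d ε / (K*l) := by
        rw [lt_div_iff₀ hKl]
        rw [lt_div_iff₀ (by positivity : (0:ℝ) < (2:ℝ)^d)] at h1
        linarith
      have h3 : (2:ℝ) ^ a ≤ (2:ℝ) ^ (d:ℝ) := Real.rpow_le_rpow_of_exponent_le one_le_two had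
      have h4 : (2:ℝ) ^ (d:ℝ) = (2:ℝ)^d := Real.rpow_natCast 2 d
      linarith
    have : (2:ℝ) = ((2:ℝ)^a) ^ a⁻¹ :=
      (Real.rpow_rpow_inv (by norm_num) ha.ne').symm
    have h5 : (2:ℝ) ≤ (Pc d ε / (K*l)) ^ a⁻¹ := by
      rw [this]
      exact Real.rpow_le_rpow (by positivity) h2d (inv_nonneg.2 ha.le)
    rw [hTdef]; linarith
  have hT0 : 0 < T := lt_of_lt_of_le one_pos hT1
  -- the key identity  Pc (2T)^(-a) = K l
  have hident : (2*T) ^ (-a) * Pc d ε = K * l := by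
    rw [h2T, ← Real.rpow_mul hPKl.le]
    rw [show a⁻¹ * (-a) = -1 by rw [mul_neg, inv_mul_cancel₀ ha.ne']]
    rw [Real.rpow_neg_one]
    field_simp
  -- the window W
  set W : Set (UHS d) := {y : Fin d → ℝ | ∀ i, y i ∈ Ioo (-T) T} ×ˢ Ioo T (2*T) with hW
  have hWmeas : MeasurableSet W := by
    refine MeasurableSet.prod ?_ measurableSet_Ioo
    have h : {y : Fin d → ℝ | ∀ i, y i ∈ Ioo (-T) T} = Set.pi univ (fun _ => Ioo (-T) T) := by
      ext y; simp [Set.mem_pi]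
    rw [h]; exact MeasurableSet.pi countable_univ (fun i _ => measurableSet_Ioo)
  -- boxOuter of W equals ofReal ((2T)^d)
  have hμW_le : boxOuter d W ≤ ENNReal.ofReal ((2*T) ^ d) := by
    refine boxOuter_le_single d W (fun _ => -T) (2*T) h2T0 ?_
    rintro ⟨y, t⟩ ⟨hy, ht⟩
    constructor
    · intro i
      have := hy i
      simp only [mem_Ioo] at *
      constructor
      · exact this.1
      · linarith [this.2]
    · simp only [mem_Ioo] at ht ⊢
      exact ⟨lt_trans hT0 ht.1, ht.2⟩
  have hμW_ge : ENNReal.ofReal ((2*T) ^ d) ≤ boxOuter d W := by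
    have hslice := slice_le_boxOuter d W ((3/2)*T)
    have h1 : {y : Fin d → ℝ | (y, (3/2)*T) ∈ W} = {y : Fin d → ℝ | ∀ i, y i ∈ Ioo (-T) T} := by
      ext y
      simp only [hW, mem_setOf_eq, mem_prod, mem_Ioo]
      constructor
      · intro h; exact h.1
      · intro h; exact ⟨h, by constructor <;> nlinarith⟩
    have h2 : volume {y : Fin d → ℝ | ∀ i, y i ∈ Ioo (-T) T} = ENNReal.ofReal ((2*T) ^ d) := by
      rw [show {y : Fin d → ℝ | ∀ i, y i ∈ Ioo (-T) T}
          = {y : Fin d → ℝ | ∀ i, y i ∈ Ioo (-T) (-T + 2*T)} by rw [show -T + 2*T = T by ring]]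
      exact volume_base_box d (fun _ => -T) (2*T) h2T0.le
    rw [h1, h2] at hslice
    exact hslice
  -- g is bounded below on W
  have hgW : ∀ w ∈ W, ENNReal.ofReal (K * l) ≤ g w := by
    rintro ⟨y, t⟩ ⟨hy, ht⟩
    rw [← hident]
    exact g_lower d ε hε a ha T hT1 y t hy ht
  have hWAc : MeasurableSet (W ∩ Aᶜ) := hWmeas.inter hA.compl
  have hsize : ellSize (boxOuter d) (uhsMeasure d) r (Aᶜ.indicator g) W ≤ ENNReal.ofReal l := by
    rw [outerSup] at hout
    exact le_trans
      (le_iSup₂ (f := fun B (_ : MeasurableSet B) =>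
        ellSize (boxOuter d) (uhsMeasure d) r (Aᶜ.indicator g) B) W hWmeas) hout
  have hKl_lt : ENNReal.ofReal l < ENNReal.ofReal (K * l) := by
    rw [ENNReal.ofReal_lt_ofReal_iff hKl]
    nlinarith
  -- estimate of ν(W ∩ Aᶜ)
  have hνAc : uhsMeasure d (W ∩ Aᶜ) ≤ ENNReal.ofReal ((2*T) ^ d * (1/4)) := by
    by_cases hrtop : r = ∞
    · rw [ellSize, if_pos hrtop] at hsize
      have hae : ∀ᵐ w ∂((uhsMeasure d).restrict W), Aᶜ.indicator g w < ENNReal.ofReal (K * l) :=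
        ae_lt_of_essSup_lt (lt_of_le_of_lt hsize hKl_lt)
      have hnull : (uhsMeasure d).restrict W {w | ¬ Aᶜ.indicator g w < ENNReal.ofReal (K * l)} = 0 := by
        rw [← ae_iff.symm] at hae
        exact hae
      have hsub : W ∩ Aᶜ ⊆ {w | ¬ Aᶜ.indicator g w < ENNReal.ofReal (K * l)} := by
        intro w hw
        simp only [mem_setOf_eq, not_lt]
        rw [indicator_of_mem hw.2]
        exact hgW w hw.1
      have h0 : (uhsMeasure d).restrict W (W ∩ Aᶜ) = 0 :=
        measure_mono_null hsub hnull
      rw [Measure.restrict_apply hWAc, Set.inter_eq_left.mpr inter_subset_left] at h0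
      rw [h0]
      exact zero_le
    · have hr0 : 0 < r.toReal := ENNReal.toReal_pos hr.ne' hrtop
      rw [ellSize, if_neg hrtop] at hsize
      set I : ℝ≥0∞ := ∫⁻ w in W, (Aᶜ.indicator g w) ^ r.toReal ∂(uhsMeasure d) with hI
      have h1 : (boxOuter d W)⁻¹ * I ≤ (ENNReal.ofReal l) ^ r.toReal := by
        have := ENNReal.rpow_le_rpow hsize hr0.le
        rwa [ENNReal.rpow_inv_rpow hr0.ne'] at this
      have hIlow : ENNReal.ofReal (K*l) ^ r.toReal * uhsMeasure d (W ∩ Aᶜ) ≤ I := by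
        calc ENNReal.ofReal (K*l) ^ r.toReal * uhsMeasure d (W ∩ Aᶜ)
            = ENNReal.ofReal (K*l) ^ r.toReal * ((uhsMeasure d).restrict W) (W ∩ Aᶜ) := by
              rw [Measure.restrict_apply hWAc, Set.inter_eq_left.mpr inter_subset_left]
          _ = ∫⁻ w in W, (W ∩ Aᶜ).indicator (fun _ => ENNReal.ofReal (K*l) ^ r.toReal) w
              ∂(uhsMeasure d) := (lintegral_indicator_const hWAc _).symm
          _ ≤ I := by
              refine lintegral_mono fun w => ?_
              by_cases hw : w ∈ W ∩ Aᶜ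
              · rw [indicator_of_mem hw]
                have : ENNReal.ofReal (K*l) ≤ Aᶜ.indicator g w := by
                  rw [indicator_of_mem hw.2]; exact hgW w hw.1
                exact ENNReal.rpow_le_rpow this hr0.le
              · rw [indicator_of_notMem hw]; exact zero_le
      have hμWne : boxOuter d W ≠ 0 := by
        refine fun h0 => ?_
        rw [h0] at hμW_ge
        simp only [le_zero_iff, ENNReal.ofReal_eq_zero] at hμW_ge
        nlinarith [pow_pos h2T0 d]
      have hμWnt : boxOuter d W ≠ ∞ :=
        ne_top_of_le_ne_top ENNReal.ofReal_ne_top hμW_le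
      have hIup : I ≤ ENNReal.ofReal ((2*T) ^ d) * (ENNReal.ofReal l) ^ r.toReal := by
        have h2 : I = boxOuter d W * ((boxOuter d W)⁻¹ * I) := by
          rw [← mul_assoc, ENNReal.mul_inv_cancel hμWne hμWnt, one_mul]
        calc I = boxOuter d W * ((boxOuter d W)⁻¹ * I) := h2
          _ ≤ ENNReal.ofReal ((2*T) ^ d) * (ENNReal.ofReal l) ^ r.toReal :=
            mul_le_mul' hμW_le h1
      have hc_ne0 : ENNReal.ofReal (K*l) ^ r.toReal ≠ 0 := by
        refine (ENNReal.rpow_pos (by rwa [ENNReal.ofReal_pos]) ENNReal.ofReal_ne_top).ne'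
      have hc_nt : ENNReal.ofReal (K*l) ^ r.toReal ≠ ∞ :=
        ENNReal.rpow_ne_top_of_nonneg hr0.le ENNReal.ofReal_ne_top
      have hfin : uhsMeasure d (W ∩ Aᶜ) ≤
          (ENNReal.ofReal (K*l) ^ r.toReal)⁻¹ *
            (ENNReal.ofReal ((2*T) ^ d) * (ENNReal.ofReal l) ^ r.toReal) := by
        have h3 : uhsMeasure d (W ∩ Aᶜ)
            = (ENNReal.ofReal (K*l) ^ r.toReal)⁻¹ *
              (ENNReal.ofReal (K*l) ^ r.toReal * uhsMeasure d (W ∩ Aᶜ)) := by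
          rw [← mul_assoc, ENNReal.inv_mul_cancel hc_ne0 hc_nt, one_mul]
        rw [h3]
        exact mul_le_mul_right (le_trans hIlow hIup) _
      refine le_trans hfin (le_of_eq ?_)
      have hKr4 : K ^ r.toReal = 4 := hKr hrtop
      have e1 : (ENNReal.ofReal l) ^ r.toReal = ENNReal.ofReal (l ^ r.toReal) :=
        ENNReal.ofReal_rpow_of_pos hl
      have e2 : (ENNReal.ofReal (K*l)) ^ r.toReal = ENNReal.ofReal ((K*l) ^ r.toReal) :=
        ENNReal.ofReal_rpow_of_pos hKl
      have e3 : (ENNReal.ofReal ((K*l) ^ r.toReal))⁻¹ = ENNReal.ofReal (((K*l) ^ r.toReal)⁻¹) :=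
        (ENNReal.ofReal_inv_of_pos (Real.rpow_pos_of_pos hKl _)).symm
      rw [e1, e2, e3, ← ENNReal.ofReal_mul (by positivity), ← ENNReal.ofReal_mul (by positivity)]
      congr 1
      rw [Real.mul_rpow hK0.le hl.le, hKr4]
      have hlr : (0:ℝ) < l ^ r.toReal := Real.rpow_pos_of_pos hl _
      field_simp
  -- lower bound for ν(W ∩ A)
  have hbox_vol : volume {y : Fin d → ℝ | ∀ i, y i ∈ Ioo (-T) T} = ENNReal.ofReal ((2*T) ^ d) := by
    rw [show {y : Fin d → ℝ | ∀ i, y i ∈ Ioo (-T) T}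
        = {y : Fin d → ℝ | ∀ i, y i ∈ Ioo (-T) (-T + 2*T)} by rw [show -T + 2*T = T by ring]]
    exact volume_base_box d (fun _ => -T) (2*T) h2T0.le
  have hνW : ENNReal.ofReal ((2*T) ^ d * (1/2)) ≤ uhsMeasure d W := by
    have : uhsMeasure d W = ENNReal.ofReal ((2*T) ^ d) * wdm (Ioo T (2*T)) := by
      rw [hW, uhsMeasure, Measure.prod_prod, hbox_vol]; rfl
    rw [this, ENNReal.ofReal_mul (by positivity)]
    exact mul_le_mul_right (wdm_Ioo_ge T hT0) _
  have hsplit : uhsMeasure d (W ∩ A) + uhsMeasure d (W ∩ Aᶜ) = uhsMeasure d W := by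
    have := measure_inter_add_diff (μ := uhsMeasure d) W hA
    rwa [Set.diff_eq] at this
  have hνWA : ENNReal.ofReal ((2*T) ^ d * (1/4)) ≤ uhsMeasure d (W ∩ A) := by
    have h4 : ENNReal.ofReal ((2*T) ^ d * (1/2)) ≤ uhsMeasure d (W ∩ A)
        + ENNReal.ofReal ((2*T) ^ d * (1/4)) := by
      calc ENNReal.ofReal ((2*T) ^ d * (1/2)) ≤ uhsMeasure d W := hνW
        _ = uhsMeasure d (W ∩ A) + uhsMeasure d (W ∩ Aᶜ) := hsplit.symm
        _ ≤ uhsMeasure d (W ∩ A) + ENNReal.ofReal ((2*T) ^ d * (1/4)) :=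
            add_le_add_right hνAc _
    have h5 := tsub_le_iff_right.2 h4
    rw [← ENNReal.ofReal_sub _ (by positivity)] at h5
    rw [show (2*T) ^ d * (1/2) - (2*T) ^ d * (1/4) = (2*T) ^ d * (1/4) by ring] at h5
    exact h5
  have hfinal : uhsMeasure d (W ∩ A) ≤ boxOuter d A := by
    refine le_trans (measure_mono ?_) (uhs_slab_inter_le d A hA T hT0)
    rintro ⟨y, t⟩ ⟨hwW, hwA⟩
    exact ⟨hwA, trivial, hwW.2⟩
  have hpow_eq : (Pc d ε / (K * l)) ^ q.toReal = (2*T) ^ d := by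
    rw [← Real.rpow_natCast (2*T) d, h2T, ← Real.rpow_mul hPKl.le]
    congr 1
    rw [haa] at *
    field_simp
  rw [hpow_eq]
  exact le_trans hνWA hfinal
/-- Failure of strong type `(1,q)` embedding estimates (Theorem 6.1, negative strong
part): for `1 ≤ q < ∞` and `0 < r ≤ ∞`, the function `f = 1_{(−1,1)^d}` satisfies
`‖t^{d − d/q} F(f)‖_{L^q(ℓ^r)} = ∞`; in particular no strong type `(1,q)` estimate
holds. -/
theorem embedding_strong_type_failure (d : ℕ) (hd : 1 ≤ d) (ε : ℝ) (hε : 0 < ε)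
    (q r : ℝ≥0∞) (hq : 1 ≤ q) (hq' : q ≠ ∞) (hr : 0 < r) :
    outerLp (boxOuter d) (uhsMeasure d) q r
        (fun w => ENNReal.ofReal (w.2 ^ ((d:ℝ) - (d:ℝ) / q.toReal)) *
          embF d ε ({x : Fin d → ℝ | ∀ i, x i ∈ Ioo (-1:ℝ) 1}.indicator fun _ => (1:ℝ)) w) =
      ∞ ∧
    ¬ ∃ C : ℝ≥0∞, C ≠ ∞ ∧
        ∀ f : (Fin d → ℝ) → ℝ, MemLp f 1 volume →
          outerLp (boxOuter d) (uhsMeasure d) q r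
              (fun w => ENNReal.ofReal (w.2 ^ ((d:ℝ) - (d:ℝ) / q.toReal)) * embF d ε f w) ≤
            C * eLpNorm f 1 volume := by
  have hq1 : (1:ℝ) ≤ q.toReal := by
    have := ENNReal.toReal_mono hq' hq; simpa using this
  have hq0 : 0 < q.toReal := lt_of_lt_of_le one_pos hq1
  have hPc := Pc_pos d ε
  -- choice of the constant K
  set K : ℝ := if r = ∞ then 2 else 4 ^ (r.toReal)⁻¹ with hKdef
  have hr0 : r ≠ ∞ → 0 < r.toReal := fun h => ENNReal.toReal_pos hr.ne' h
  have hK : 1 < K := by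
    rw [hKdef]
    split_ifs with h
    · norm_num
    · rw [show (1:ℝ) = 1 ^ (r.toReal)⁻¹ by rw [Real.one_rpow]]
      exact Real.rpow_lt_rpow (by norm_num) (by norm_num) (inv_pos.2 (hr0 h))
  have hK0 : 0 < K := lt_trans one_pos hK
  have hKr : r ≠ ∞ → K ^ r.toReal = 4 := by
    intro h
    rw [hKdef, if_neg h]
    exact Real.rpow_inv_rpow (by norm_num) (hr0 h).ne'
  -- the threshold
  set lam0 : ℝ := Pc d ε / (K * 2 ^ d) with hlam0def
  have hlam0 : 0 < lam0 := by
    rw [hlam0def]; positivity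
  set c5 : ℝ := (Pc d ε / K) ^ q.toReal * (1/4) with hc5def
  have hc5 : 0 < c5 := by
    rw [hc5def]
    have : (0:ℝ) < (Pc d ε / K) ^ q.toReal := Real.rpow_pos_of_pos (by positivity) _
    positivity
  have hmain : outerLp (boxOuter d) (uhsMeasure d) q r
      (fun w => ENNReal.ofReal (w.2 ^ ((d:ℝ) - (d:ℝ) / q.toReal)) *
        embF d ε ({x : Fin d → ℝ | ∀ i, x i ∈ Ioo (-1:ℝ) 1}.indicator fun _ => (1:ℝ)) w) = ∞ := by
    rw [outerLp, if_neg hq']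
    have hint : ∫⁻ l in Ioi (0:ℝ),
        ENNReal.ofReal (q.toReal * l ^ (q.toReal - 1)) *
          superLevel (boxOuter d) (uhsMeasure d) r
            (fun w => ENNReal.ofReal (w.2 ^ ((d:ℝ) - (d:ℝ) / q.toReal)) *
              embF d ε ({x : Fin d → ℝ | ∀ i, x i ∈ Ioo (-1:ℝ) 1}.indicator fun _ => (1:ℝ)) w)
            (ENNReal.ofReal l) = ∞ := by
      have hdiv : ∫⁻ l in Ioo (0:ℝ) lam0, ENNReal.ofReal c5 * ENNReal.ofReal l⁻¹ = ∞ := by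
        rw [lintegral_const_mul _ (show Measurable fun l : ℝ => ENNReal.ofReal l⁻¹ from ENNReal.measurable_ofReal.comp measurable_inv)]
        rw [lintegral_inv_Ioo_top lam0 hlam0]
        exact ENNReal.mul_top (ENNReal.ofReal_pos.2 hc5).ne'
      rw [eq_top_iff, ← hdiv]
      calc ∫⁻ l in Ioo (0:ℝ) lam0, ENNReal.ofReal c5 * ENNReal.ofReal l⁻¹
          ≤ ∫⁻ l in Ioo (0:ℝ) lam0,
            ENNReal.ofReal (q.toReal * l ^ (q.toReal - 1)) *
              superLevel (boxOuter d) (uhsMeasure d) r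
                (fun w => ENNReal.ofReal (w.2 ^ ((d:ℝ) - (d:ℝ) / q.toReal)) *
                  embF d ε ({x : Fin d → ℝ | ∀ i, x i ∈ Ioo (-1:ℝ) 1}.indicator fun _ => (1:ℝ)) w)
                (ENNReal.ofReal l) := by
            refine setLIntegral_mono' measurableSet_Ioo fun l hl => ?_
            obtain ⟨hl0, hllam⟩ := hl
            -- lower bound on the super level measure
            have hsl : ENNReal.ofReal ((Pc d ε / (K * l)) ^ q.toReal * (1/4)) ≤
                superLevel (boxOuter d) (uhsMeasure d) r
                  (fun w => ENNReal.ofReal (w.2 ^ ((d:ℝ) - (d:ℝ) / q.toReal)) *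
                    embF d ε ({x : Fin d → ℝ | ∀ i, x i ∈ Ioo (-1:ℝ) 1}.indicator fun _ => (1:ℝ)) w)
                  (ENNReal.ofReal l) := by
              rw [superLevel]
              refine le_iInf fun A => le_iInf fun hA => le_iInf fun hout => ?_
              exact key_lemma d hd ε hε q r hq hq' hr K hK hKr l hl0 hllam A hA hout
            have hreal : c5 * l⁻¹ ≤ q.toReal * l ^ (q.toReal - 1) *
                ((Pc d ε / (K * l)) ^ q.toReal * (1/4)) := by
              have e1 : (Pc d ε / (K * l)) ^ q.toReal
                  = (Pc d ε / K) ^ q.toReal * (l ^ q.toReal)⁻¹ := by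
                rw [show Pc d ε / (K * l) = (Pc d ε / K) * l⁻¹ by field_simp]
                rw [Real.mul_rpow (by positivity) (by positivity), Real.inv_rpow hl0.le]
              have e2 : l ^ (q.toReal - 1) * (l ^ q.toReal)⁻¹ = l⁻¹ := by
                rw [Real.rpow_sub hl0, Real.rpow_one]
                have : (0:ℝ) < l ^ q.toReal := Real.rpow_pos_of_pos hl0 _
                field_simp
              calc c5 * l⁻¹ ≤ q.toReal * (c5 * l⁻¹) := by
                    have h1 : 0 ≤ c5 * l⁻¹ := by positivity
                    nlinarith
                _ = q.toReal * l ^ (q.toReal - 1) *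
                    ((Pc d ε / (K * l)) ^ q.toReal * (1/4)) := by
                    rw [e1, hc5def]
                    rw [show q.toReal * l ^ (q.toReal - 1) *
                        ((Pc d ε / K) ^ q.toReal * (l ^ q.toReal)⁻¹ * (1/4))
                      = q.toReal * ((Pc d ε / K) ^ q.toReal * (1/4) *
                          (l ^ (q.toReal - 1) * (l ^ q.toReal)⁻¹)) by ring]
                    rw [e2]
            calc ENNReal.ofReal c5 * ENNReal.ofReal l⁻¹
                = ENNReal.ofReal (c5 * l⁻¹) := (ENNReal.ofReal_mul hc5.le).symm
              _ ≤ ENNReal.ofReal (q.toReal * l ^ (q.toReal - 1) *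
                  ((Pc d ε / (K * l)) ^ q.toReal * (1/4))) := ENNReal.ofReal_le_ofReal hreal
              _ = ENNReal.ofReal (q.toReal * l ^ (q.toReal - 1)) *
                  ENNReal.ofReal ((Pc d ε / (K * l)) ^ q.toReal * (1/4)) :=
                  ENNReal.ofReal_mul (by positivity)
              _ ≤ _ := mul_le_mul_right hsl _
        _ ≤ _ := lintegral_mono_set (fun x hx => hx.1)
    rw [hint]
    exact ENNReal.top_rpow_of_pos (inv_pos.2 hq0)
  refine ⟨hmain, ?_⟩
  rintro ⟨C, hC, hCb⟩
  set f : (Fin d → ℝ) → ℝ := {x : Fin d → ℝ | ∀ i, x i ∈ Ioo (-1:ℝ) 1}.indicator fun _ => (1:ℝ)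
    with hfdef
  have hmem : MemLp f 1 volume := by
    rw [memLp_one_iff_integrable]
    refine IntegrableOn.integrable_indicator ?_ (measurableSet_S1 d)
    refine integrableOn_const (lt_top_iff_ne_top.1 ?_)
    rw [volume_S1 d]
    exact ENNReal.ofReal_lt_top
  have hfin : C * eLpNorm f 1 volume ≠ ∞ :=
    ENNReal.mul_ne_top hC hmem.eLpNorm_ne_top
  have := hCb f hmem
  rw [hmain] at this
  exact hfin (le_antisymm (le_top) (le_trans le_top this) ▸ rfl)

end
end

section
/- Embedding of Hardy space atoms (key case of Proposition 6.2): Let d ≥ 1 and let φ : ℝ^d → ℝ be a smooth function supported in the cube [−1,1]^d. There exists a constant C = C(d,φ) such that for every cube B ⊆ ℝ^d and every measurable function f : ℝ^d → ℝ that is an H^1-atom associated with B (i.e. f is essentially supported in B, ∫_B f(x) dx = 0, and |f| ≤ |B|^{-1} almost everywhere), the function F_φ(f)(y,t) = ∫_{ℝ^d} f(x) t^{-d} φ(t^{-1}(y−x)) dx satisfies ‖ |F_φ(f)| ‖_{L^1(ℓ^∞)} ≤ C. -/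
open MeasureTheory Set
open scoped ENNReal

noncomputable section

private lemma uhs_ae_pos (d : ℕ) : ∀ᵐ w ∂(uhsMeasure d), 0 < w.2 := by
  rw [ae_iff]
  have hset : {w : UHS d | ¬ 0 < w.2} = (univ : Set (Fin d → ℝ)) ×ˢ Iic (0:ℝ) := by
    ext w; simp [not_lt]
  rw [hset, uhsMeasure, Measure.prod_prod]
  have : (volume.withDensity fun t => ENNReal.ofReal t⁻¹) (Iic (0:ℝ)) = 0 := by
    rw [withDensity_apply _ measurableSet_Iic]
    rw [setLIntegral_congr_fun measurableSet_Iic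
      (fun t (ht : t ≤ 0) => ENNReal.ofReal_eq_zero.2 (inv_nonpos.2 ht))]
    simp
  rw [this, mul_zero]

private lemma outerSup_le_of_ae (d : ℕ) (g : UHS d → ℝ≥0∞) (lam : ℝ≥0∞)
    (h : ∀ᵐ w ∂(uhsMeasure d), g w ≤ lam) :
    outerSup (boxOuter d) (uhsMeasure d) ∞ g ≤ lam := by
  rw [outerSup]
  refine iSup₂_le fun A hA => ?_
  rw [ellSize, if_pos rfl]
  exact essSup_le_of_ae_le _ (ae_restrict_of_ae h)

private lemma cbox_measurable (d : ℕ) (x0 : Fin d → ℝ) (s0 : ℝ) :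
    MeasurableSet (cbox d x0 s0) := by
  have : cbox d x0 s0 =
      (⋂ i, (fun q : UHS d => q.1 i) ⁻¹' Ioo (x0 i) (x0 i + s0)) ∩
        (Prod.snd ⁻¹' Ioo 0 s0) := by
    ext q; simp [cbox, forall_and]
  rw [this]
  exact (MeasurableSet.iInter fun i =>
      ((measurable_pi_apply i).comp measurable_fst) measurableSet_Ioo).inter
    (measurable_snd measurableSet_Ioo)

private lemma boxOuter_le_single_s17 (d : ℕ) (x0 : Fin d → ℝ) (s0 : ℝ) (h : 0 < s0) :
    boxOuter d (cbox d x0 s0) ≤ ENNReal.ofReal (s0 ^ d) := by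
  rw [boxOuter]
  refine iInf_le_of_le {(x0, s0)} (iInf_le_of_le (countable_singleton _)
    (iInf_le_of_le ?_ (iInf_le_of_le ?_ ?_)))
  · rintro e he
    rw [mem_singleton_iff] at he
    subst he
    exact h
  · intro q hq
    exact mem_biUnion rfl hq
  · haveI : Unique (({((x0 : Fin d → ℝ), s0)} : Set ((Fin d → ℝ) × ℝ))) :=
      Set.uniqueSingleton _
    rw [tsum_eq_single default (fun b hb => absurd (Unique.eq_default b) hb)]
    have hd : ((default : ({((x0 : Fin d → ℝ), s0)} : Set ((Fin d → ℝ) × ℝ))) : (Fin d → ℝ) × ℝ) = (x0, s0) := by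
      have := (default : ({((x0 : Fin d → ℝ), s0)} : Set ((Fin d → ℝ) × ℝ))).2
      rwa [mem_singleton_iff] at this
    rw [hd]

private lemma boxOuter_empty (d : ℕ) : boxOuter d (∅ : Set (UHS d)) = 0 := by
  apply le_antisymm _ zero_le
  rw [boxOuter]
  refine iInf_le_of_le ∅ (iInf_le_of_le countable_empty
    (iInf_le_of_le (fun e he => absurd he (notMem_empty e))
      (iInf_le_of_le (empty_subset _) ?_)))
  simp [tsum_empty]
private lemma hae_integrand_bound (d : ℕ) (φ : (Fin d → ℝ) → ℝ) (M : ℝ)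
    (hM : ∀ x, |φ x| ≤ M)
    (hφsupp : ∀ x : Fin d → ℝ, x ∉ {y : Fin d → ℝ | ∀ i, y i ∈ Icc (-1:ℝ) 1} → φ x = 0)
    (s : ℝ) (hs : 0 < s) (f : (Fin d → ℝ) → ℝ)
    (hbound : ∀ᵐ x ∂(volume : Measure (Fin d → ℝ)), |f x| ≤ (s ^ d)⁻¹)
    (y : Fin d → ℝ) (t : ℝ) (ht : 0 < t) :
    |∫ x, f x * t ^ (-(d:ℝ)) * φ (t⁻¹ • (y - x))| ≤ 2 ^ d * M / s ^ d := by
  have hMnn : 0 ≤ M := le_trans (abs_nonneg _) (hM 0)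
  set Q : Set (Fin d → ℝ) := Set.univ.pi fun i => Icc (y i - t) (y i + t) with hQ
  have hQmeas : MeasurableSet Q := MeasurableSet.univ_pi fun i => measurableSet_Icc
  have hQvol : volume Q = ENNReal.ofReal (2 * t) ^ d := by
    rw [hQ, volume_pi_pi]
    have h1 : ∀ i : Fin d, volume (Icc (y i - t) (y i + t)) = ENNReal.ofReal (2 * t) := by
      intro i; rw [Real.volume_Icc]; ring_nf
    simp only [h1, Finset.prod_const, Finset.card_univ, Fintype.card_fin]
  set g : (Fin d → ℝ) → ℝ := Q.indicator fun _ => (s ^ d)⁻¹ * (t ^ d)⁻¹ * M with hg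
  have hconstnn : 0 ≤ (s ^ d)⁻¹ * (t ^ d)⁻¹ * M := by positivity
  have hgint : Integrable g := by
    rw [hg, integrable_indicator_iff hQmeas]
    refine integrableOn_const ?_ enorm_ne_top
    rw [hQvol]
    exact (ENNReal.pow_lt_top ENNReal.ofReal_lt_top).ne
  have htpow : t ^ (-(d:ℝ)) = (t ^ d)⁻¹ := by
    rw [Real.rpow_neg ht.le, Real.rpow_natCast]
  have hle : ∀ᵐ x ∂(volume : Measure (Fin d → ℝ)),
      ‖f x * t ^ (-(d:ℝ)) * φ (t⁻¹ • (y - x))‖ ≤ g x := by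
    filter_upwards [hbound] with x hx
    by_cases hxQ : x ∈ Q
    · rw [hg, indicator_of_mem hxQ, Real.norm_eq_abs, abs_mul, abs_mul, htpow]
      apply mul_le_mul (mul_le_mul hx (le_of_eq (abs_of_pos (by positivity)))
        (abs_nonneg _) (by positivity)) (hM _) (abs_nonneg _) (by positivity)
    · have hz : φ (t⁻¹ • (y - x)) = 0 := by
        apply hφsupp
        intro hmem
        apply hxQ
        intro i _
        have h2 := hmem i
        simp only [Pi.smul_apply, Pi.sub_apply, smul_eq_mul, mem_Icc] at h2
        have hti : t * t⁻¹ = 1 := mul_inv_cancel₀ (ne_of_gt ht)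
        constructor
        · nlinarith [mul_le_mul_of_nonneg_left h2.2 ht.le]
        · nlinarith [mul_le_mul_of_nonneg_left h2.1 ht.le]
      rw [hz, mul_zero, norm_zero, hg, indicator_of_notMem hxQ]
  calc |∫ x, f x * t ^ (-(d:ℝ)) * φ (t⁻¹ • (y - x))|
      ≤ ∫ x, g x := norm_integral_le_of_norm_le hgint hle
    _ ≤ 2 ^ d * M / s ^ d := by
        rw [hg, integral_indicator_const _ hQmeas, measureReal_def, hQvol, smul_eq_mul]
        have h2 : ((ENNReal.ofReal (2*t)) ^ d).toReal = (2*t)^d := by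
          rw [ENNReal.toReal_pow, ENNReal.toReal_ofReal (by positivity)]
        rw [h2, mul_pow]
        apply le_of_eq
        have ht' : (t:ℝ)^d ≠ 0 := by positivity
        have hs' : (s:ℝ)^d ≠ 0 := by positivity
        field_simp
private lemma integrand_vanish (d : ℕ) (φ : (Fin d → ℝ) → ℝ)
    (hφsupp : ∀ x : Fin d → ℝ, x ∉ {y : Fin d → ℝ | ∀ i, y i ∈ Icc (-1:ℝ) 1} → φ x = 0)
    (c : Fin d → ℝ) (s : ℝ) (f : (Fin d → ℝ) → ℝ)
    (hsupp : ∀ᵐ x ∂(volume : Measure (Fin d → ℝ)),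
      x ∉ {y : Fin d → ℝ | ∀ i, y i ∈ Icc (c i) (c i + s)} → f x = 0)
    (y : Fin d → ℝ) (t : ℝ) (ht : 0 < t) (i : Fin d)
    (hy : y i ≤ c i - t ∨ c i + s + t ≤ y i) :
    ∫ x, f x * t ^ (-(d:ℝ)) * φ (t⁻¹ • (y - x)) = 0 := by
  have hti : t * t⁻¹ = 1 := mul_inv_cancel₀ (ne_of_gt ht)
  have h1 : ∀ᵐ x : Fin d → ℝ ∂volume, x i ≠ c i := by
    rw [volume_pi]
    exact MeasureTheory.Measure.ae_eval_ne (fun _ : Fin d => (volume : Measure ℝ)) i (c i)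
  have h2 : ∀ᵐ x : Fin d → ℝ ∂volume, x i ≠ c i + s := by
    rw [volume_pi]
    exact MeasureTheory.Measure.ae_eval_ne (fun _ : Fin d => (volume : Measure ℝ)) i (c i + s)
  apply integral_eq_zero_of_ae
  filter_upwards [hsupp, h1, h2] with x hx hx1 hx2
  by_cases hxB : x ∈ {y : Fin d → ℝ | ∀ i, y i ∈ Icc (c i) (c i + s)}
  · have hxi := hxB i
    simp only [mem_Icc] at hxi
    have hlt1 : c i < x i := lt_of_le_of_ne hxi.1 (Ne.symm hx1)
    have hlt2 : x i < c i + s := lt_of_le_of_ne hxi.2 hx2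
    have hz : φ (t⁻¹ • (y - x)) = 0 := by
      apply hφsupp
      intro hmem
      have h3 := hmem i
      simp only [Pi.smul_apply, Pi.sub_apply, smul_eq_mul, mem_Icc] at h3
      rcases hy with hy | hy
      · nlinarith [mul_le_mul_of_nonneg_left h3.1 ht.le]
      · nlinarith [mul_le_mul_of_nonneg_left h3.2 ht.le]
    simp [hz]
  · simp [hx hxB]

private lemma decay_bound (d : ℕ) (φ : (Fin d → ℝ) → ℝ) (hφc : Continuous φ) (M K : ℝ)
    (hM : ∀ x, |φ x| ≤ M) (hKnn : 0 ≤ K)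
    (hK : ∀ u v : Fin d → ℝ, |φ u - φ v| ≤ K * ‖u - v‖)
    (c : Fin d → ℝ) (s : ℝ) (hs : 0 < s) (f : (Fin d → ℝ) → ℝ) (hf : Measurable f)
    (hsupp : ∀ᵐ x ∂(volume : Measure (Fin d → ℝ)),
      x ∉ {y : Fin d → ℝ | ∀ i, y i ∈ Icc (c i) (c i + s)} → f x = 0)
    (hmean : (∫ x in {y : Fin d → ℝ | ∀ i, y i ∈ Icc (c i) (c i + s)}, f x) = 0)
    (hbound : ∀ᵐ x ∂(volume : Measure (Fin d → ℝ)), |f x| ≤ (s ^ d)⁻¹)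
    (y : Fin d → ℝ) (t : ℝ) (ht : 0 < t) :
    |∫ x, f x * t ^ (-(d:ℝ)) * φ (t⁻¹ • (y - x))| ≤ K * s / t ^ (d+1) := by
  have hMnn : 0 ≤ M := le_trans (abs_nonneg _) (hM 0)
  set B : Set (Fin d → ℝ) := {y : Fin d → ℝ | ∀ i, y i ∈ Icc (c i) (c i + s)} with hB
  have hBeq : B = Set.univ.pi fun i => Icc (c i) (c i + s) := by
    ext x
    simp only [hB, mem_setOf_eq, Set.mem_pi, Set.mem_univ, true_implies, mem_Icc]
  have hBmeas : MeasurableSet B := by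
    rw [hBeq]; exact MeasurableSet.univ_pi fun i => measurableSet_Icc
  have hBvol : volume B = ENNReal.ofReal s ^ d := by
    rw [hBeq, volume_pi_pi]
    have h1 : ∀ i : Fin d, volume (Icc (c i) (c i + s)) = ENNReal.ofReal s := by
      intro i; rw [Real.volume_Icc]; ring_nf
    simp only [h1, Finset.prod_const, Finset.card_univ, Fintype.card_fin]
  have hBvolt : (volume B).toReal = s ^ d := by
    rw [hBvol, ENNReal.toReal_pow, ENNReal.toReal_ofReal hs.le]
  have hBfin : volume B < ⊤ := by
    rw [hBvol]; exact ENNReal.pow_lt_top ENNReal.ofReal_lt_top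
  have hindint : ∀ r : ℝ, Integrable (B.indicator fun _ => r) := by
    intro r
    rw [integrable_indicator_iff hBmeas]
    exact integrableOn_const hBfin.ne (by simp)
  have htpow : t ^ (-(d:ℝ)) = (t ^ d)⁻¹ := by
    rw [Real.rpow_neg ht.le, Real.rpow_natCast]
  have htpownn : (0:ℝ) ≤ t ^ (-(d:ℝ)) := by rw [htpow]; positivity
  -- integrability of the main integrand
  have hmeas : AEStronglyMeasurable (fun x => f x * t ^ (-(d:ℝ)) * φ (t⁻¹ • (y - x)))
      (volume : Measure (Fin d → ℝ)) :=
    (((hf.mul_const _).mul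
      (hφc.measurable.comp ((measurable_const.sub measurable_id).const_smul t⁻¹)))).aestronglyMeasurable
  have hint : Integrable (fun x => f x * t ^ (-(d:ℝ)) * φ (t⁻¹ • (y - x)))
      (volume : Measure (Fin d → ℝ)) := by
    apply Integrable.mono' (hindint ((s^d)⁻¹ * (t ^ (-(d:ℝ)) * M))) hmeas
    filter_upwards [hsupp, hbound] with x hx hxb
    by_cases hxB : x ∈ B
    · rw [indicator_of_mem hxB]
      rw [Real.norm_eq_abs, abs_mul, abs_mul, abs_of_nonneg htpownn]
      calc |f x| * t ^ (-(d:ℝ)) * |φ _| ≤ (s^d)⁻¹ * t ^ (-(d:ℝ)) * M := by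
            apply mul_le_mul (mul_le_mul hxb le_rfl htpownn (by positivity)) (hM _)
              (abs_nonneg _) (by positivity)
        _ = (s^d)⁻¹ * (t ^ (-(d:ℝ)) * M) := by ring
    · rw [indicator_of_notMem hxB, hx hxB]
      simp
  -- mean zero over all of ℝ^d
  have hzero : ∫ x, f x ∂(volume : Measure (Fin d → ℝ)) = 0 := by
    rw [← setIntegral_eq_integral_of_ae_compl_eq_zero hsupp]
    exact hmean
  set C' : ℝ := t ^ (-(d:ℝ)) * φ (t⁻¹ • (y - c)) with hC'
  have hfint : Integrable f (volume : Measure (Fin d → ℝ)) := by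
    apply Integrable.mono' (hindint ((s^d)⁻¹)) hf.aestronglyMeasurable
    filter_upwards [hsupp, hbound] with x hx hxb
    by_cases hxB : x ∈ B
    · rw [indicator_of_mem hxB]; exact hxb
    · rw [indicator_of_notMem hxB, hx hxB]; simp
  have hvint : Integrable (fun x => f x * C') (volume : Measure (Fin d → ℝ)) :=
    hfint.mul_const C'
  have hvzero : ∫ x, f x * C' ∂(volume : Measure (Fin d → ℝ)) = 0 := by
    rw [integral_mul_const, hzero, zero_mul]
  have hsplit : ∫ x, f x * t ^ (-(d:ℝ)) * φ (t⁻¹ • (y - x)) =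
      ∫ x, (f x * t ^ (-(d:ℝ)) * φ (t⁻¹ • (y - x)) - f x * C') := by
    rw [integral_sub hint hvint, hvzero, sub_zero]
  rw [hsplit]
  have hble : ∀ᵐ x ∂(volume : Measure (Fin d → ℝ)),
      ‖f x * t ^ (-(d:ℝ)) * φ (t⁻¹ • (y - x)) - f x * C'‖ ≤
        B.indicator (fun _ => (s^d)⁻¹ * (t ^ (-(d:ℝ)) * (K * (s * t⁻¹)))) x := by
    filter_upwards [hsupp, hbound] with x hx hxb
    by_cases hxB : x ∈ B
    · rw [indicator_of_mem hxB]
      have hfactor : f x * t ^ (-(d:ℝ)) * φ (t⁻¹ • (y - x)) - f x * C' =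
          f x * t ^ (-(d:ℝ)) * (φ (t⁻¹ • (y - x)) - φ (t⁻¹ • (y - c))) := by
        rw [hC']; ring
      rw [hfactor, Real.norm_eq_abs, abs_mul, abs_mul, abs_of_nonneg htpownn]
      have hdist : |φ (t⁻¹ • (y - x)) - φ (t⁻¹ • (y - c))| ≤ K * (s * t⁻¹) := by
        refine (hK _ _).trans ?_
        have harg : t⁻¹ • (y - x) - t⁻¹ • (y - c) = t⁻¹ • (c - x) := by
          rw [← smul_sub]
          congr 1
          abel
        rw [harg, norm_smul, Real.norm_eq_abs, abs_of_pos (by positivity : (0:ℝ) < t⁻¹)]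
        apply mul_le_mul_of_nonneg_left _ hKnn
        rw [mul_comm]
        apply mul_le_mul_of_nonneg_right _ (by positivity : (0:ℝ) ≤ t⁻¹)
        rw [pi_norm_le_iff_of_nonneg hs.le]
        intro i
        have := hxB i
        simp only [mem_Icc] at this
        rw [Real.norm_eq_abs, Pi.sub_apply, abs_le]
        constructor <;> linarith [this.1, this.2]
      calc |f x| * t ^ (-(d:ℝ)) * |φ (t⁻¹ • (y - x)) - φ (t⁻¹ • (y - c))|
          ≤ (s^d)⁻¹ * t ^ (-(d:ℝ)) * (K * (s * t⁻¹)) := by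
            apply mul_le_mul (mul_le_mul hxb le_rfl htpownn (by positivity)) hdist
              (abs_nonneg _) (by positivity)
        _ = (s^d)⁻¹ * (t ^ (-(d:ℝ)) * (K * (s * t⁻¹))) := by ring
    · rw [indicator_of_notMem hxB, hx hxB]
      simp
  calc |∫ x, (f x * t ^ (-(d:ℝ)) * φ (t⁻¹ • (y - x)) - f x * C')|
      ≤ ∫ x, B.indicator (fun _ => (s^d)⁻¹ * (t ^ (-(d:ℝ)) * (K * (s * t⁻¹)))) x :=
        norm_integral_le_of_norm_le (hindint _) hble
    _ ≤ K * s / t ^ (d+1) := by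
        rw [integral_indicator_const _ hBmeas, measureReal_def, hBvolt, smul_eq_mul, htpow]
        apply le_of_eq
        have hs' : (s:ℝ)^d ≠ 0 := by positivity
        have ht' : (t:ℝ) ≠ 0 := ne_of_gt ht
        field_simp
        ring
private lemma superLevel_le_box (d : ℕ) (φ : (Fin d → ℝ) → ℝ) (hφc : Continuous φ) (M K : ℝ)
    (hM : ∀ x, |φ x| ≤ M) (hKpos : 0 < K)
    (hK : ∀ u v : Fin d → ℝ, |φ u - φ v| ≤ K * ‖u - v‖)
    (hφsupp : ∀ x : Fin d → ℝ, x ∉ {y : Fin d → ℝ | ∀ i, y i ∈ Icc (-1:ℝ) 1} → φ x = 0)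
    (c : Fin d → ℝ) (s : ℝ) (hs : 0 < s) (f : (Fin d → ℝ) → ℝ) (hf : Measurable f)
    (hsupp : ∀ᵐ x ∂(volume : Measure (Fin d → ℝ)),
      x ∉ {y : Fin d → ℝ | ∀ i, y i ∈ Icc (c i) (c i + s)} → f x = 0)
    (hmean : (∫ x in {y : Fin d → ℝ | ∀ i, y i ∈ Icc (c i) (c i + s)}, f x) = 0)
    (hbound : ∀ᵐ x ∂(volume : Measure (Fin d → ℝ)), |f x| ≤ (s ^ d)⁻¹)
    (l : ℝ) (hl : 0 < l) :
    superLevel (boxOuter d) (uhsMeasure d) ∞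
        (fun w => ENNReal.ofReal |∫ x, f x * w.2 ^ (-(d:ℝ)) * φ (w.2⁻¹ • (w.1 - x))|)
        (ENNReal.ofReal l) ≤
      ENNReal.ofReal ((s + 2 * (K * s / l) ^ (((d:ℝ)+1)⁻¹)) ^ d) := by
  set L : ℝ := (K * s / l) ^ (((d:ℝ)+1)⁻¹) with hLdef
  have hKsl : 0 < K * s / l := by positivity
  have hLpos : 0 < L := Real.rpow_pos_of_pos hKsl _
  have hd1 : ((d:ℝ) + 1) ≠ 0 := by positivity
  have hLpow : L ^ (d+1 : ℕ) = K * s / l := by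
    rw [hLdef, ← Real.rpow_natCast ((K * s / l) ^ (((d:ℝ)+1)⁻¹)) (d+1), ← Real.rpow_mul hKsl.le]
    push_cast
    rw [inv_mul_cancel₀ hd1, Real.rpow_one]
  have hdecay : ∀ t : ℝ, L ≤ t → 0 < t → K * s / t ^ (d+1) ≤ l := by
    intro t hLt ht
    have h1 : L ^ (d+1 : ℕ) ≤ t ^ (d+1 : ℕ) := pow_le_pow_left₀ hLpos.le hLt _
    rw [hLpow] at h1
    have h2 : K * s / t ^ (d+1) ≤ K * s / (K * s / l) :=
      div_le_div_of_nonneg_left (by positivity) hKsl h1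
    refine h2.trans (le_of_eq ?_)
    field_simp
  set A : Set (UHS d) := cbox d (fun i => c i - L) (s + 2 * L) with hA
  refine iInf_le_of_le A (iInf_le_of_le (cbox_measurable d _ _) (iInf_le_of_le ?_ ?_))
  · -- outerSup of the complement-indicator is ≤ l
    apply outerSup_le_of_ae
    filter_upwards [uhs_ae_pos d] with w hw
    by_cases hwA : w ∈ A
    · rw [indicator_of_notMem (notMem_compl_iff.2 hwA)]
      exact zero_le
    · rw [indicator_of_mem (mem_compl hwA)]
      apply ENNReal.ofReal_le_ofReal
      by_cases htL : L < w.2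
      · exact (decay_bound d φ hφc M K hM hKpos.le hK c s hs f hf hsupp hmean hbound
          w.1 w.2 hw).trans (hdecay w.2 htL.le hw)
      · push_neg at htL
        have hw2 : w.2 ∈ Ioo 0 (s + 2 * L) := ⟨hw, by nlinarith⟩
        have hnex : ¬ ∀ i, w.1 i ∈ Ioo ((fun i => c i - L) i) ((fun i => c i - L) i + (s + 2*L)) := by
          intro hall
          exact hwA ⟨hall, hw2⟩
        push_neg at hnex
        obtain ⟨i, hi⟩ := hnex
        rw [mem_Ioo, not_and_or, not_lt, not_lt] at hi
        have hvan : ∫ x, f x * w.2 ^ (-(d:ℝ)) * φ (w.2⁻¹ • (w.1 - x)) = 0 := by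
          apply integrand_vanish d φ hφsupp c s f hsupp w.1 w.2 hw i
          rcases hi with hi | hi
          · left; linarith
          · right; linarith
        rw [hvan, abs_zero]
        exact hl.le
  · exact boxOuter_le_single_s17 d _ _ (by positivity)

private lemma superLevel_zero_of_large (d : ℕ) (φ : (Fin d → ℝ) → ℝ) (M : ℝ)
    (hM : ∀ x, |φ x| ≤ M)
    (hφsupp : ∀ x : Fin d → ℝ, x ∉ {y : Fin d → ℝ | ∀ i, y i ∈ Icc (-1:ℝ) 1} → φ x = 0)
    (s : ℝ) (hs : 0 < s) (f : (Fin d → ℝ) → ℝ)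
    (hbound : ∀ᵐ x ∂(volume : Measure (Fin d → ℝ)), |f x| ≤ (s ^ d)⁻¹)
    (l : ℝ) (hl : 2 ^ d * M / s ^ d ≤ l) :
    superLevel (boxOuter d) (uhsMeasure d) ∞
        (fun w => ENNReal.ofReal |∫ x, f x * w.2 ^ (-(d:ℝ)) * φ (w.2⁻¹ • (w.1 - x))|)
        (ENNReal.ofReal l) = 0 := by
  apply le_antisymm _ zero_le
  refine iInf_le_of_le ∅ (iInf_le_of_le MeasurableSet.empty (iInf_le_of_le ?_ ?_))
  · apply outerSup_le_of_ae
    filter_upwards [uhs_ae_pos d] with w hw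
    rw [compl_empty, indicator_univ]
    exact ENNReal.ofReal_le_ofReal
      ((hae_integrand_bound d φ M hM hφsupp s hs f hbound w.1 w.2 hw).trans hl)
  · exact le_of_eq (boxOuter_empty d)

/-- Embedding of Hardy space atoms (key case of Proposition 6.2): for a smooth `φ`
supported in `[−1,1]^d` there is a constant `C = C(d,φ)` such that for every cube
`B = Π_i [c_i, c_i + s]` and every `H^1`-atom `f` associated with `B` (essentially
supported in `B`, mean zero, `|f| ≤ |B|⁻¹` a.e.), the embedded function
`F_φ(f)(y,t) = ∫ f(x) t^{-d} φ(t⁻¹(y−x)) dx` satisfies `‖|F_φ(f)|‖_{L^1(ℓ^∞)} ≤ C`. -/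
theorem hardy_atom_embedding (d : ℕ) (hd : 1 ≤ d) (φ : (Fin d → ℝ) → ℝ)
    (hφ : ContDiff ℝ (⊤ : ℕ∞) φ)
    (hφsupp : ∀ x : Fin d → ℝ, x ∉ {y : Fin d → ℝ | ∀ i, y i ∈ Icc (-1:ℝ) 1} → φ x = 0) :
    ∃ C : ℝ≥0∞, C ≠ ∞ ∧
      ∀ (c : Fin d → ℝ) (s : ℝ), 0 < s →
        ∀ f : (Fin d → ℝ) → ℝ, Measurable f →
          (∀ᵐ x ∂(volume : Measure (Fin d → ℝ)),
            x ∉ {y : Fin d → ℝ | ∀ i, y i ∈ Icc (c i) (c i + s)} → f x = 0) →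
          (∫ x in {y : Fin d → ℝ | ∀ i, y i ∈ Icc (c i) (c i + s)}, f x) = 0 →
          (∀ᵐ x ∂(volume : Measure (Fin d → ℝ)), |f x| ≤ (s ^ d)⁻¹) →
          outerLp (boxOuter d) (uhsMeasure d) 1 ∞
              (fun w => ENNReal.ofReal
                |∫ x, f x * w.2 ^ (-(d:ℝ)) * φ (w.2⁻¹ • (w.1 - x))|) ≤ C := by
  have hφc : Continuous φ := hφ.continuous
  have hcs : HasCompactSupport φ := by
    apply HasCompactSupport.intro (K := {y : Fin d → ℝ | ∀ i, y i ∈ Icc (-1:ℝ) 1}) ?_ hφsupp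
    have : {y : Fin d → ℝ | ∀ i, y i ∈ Icc (-1:ℝ) 1} =
        Set.univ.pi fun _ => Icc (-1:ℝ) 1 := by
      ext x
      simp only [mem_setOf_eq, Set.mem_pi, Set.mem_univ, true_implies]
    rw [this]
    exact isCompact_univ_pi fun _ => isCompact_Icc
  obtain ⟨M0, hM0⟩ := hφc.bounded_above_of_compact_support hcs
  obtain ⟨K0, hK0⟩ := hφ.lipschitzWith_of_hasCompactSupport hcs (by simp)
  set M : ℝ := max M0 1 with hMdef
  have hM : ∀ x, |φ x| ≤ M := fun x => (Real.norm_eq_abs (φ x) ▸ hM0 x).trans (le_max_left _ _)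
  have hM1 : (1:ℝ) ≤ M := le_max_right _ _
  have hMpos : (0:ℝ) < M := lt_of_lt_of_le one_pos hM1
  set K : ℝ := max (K0:ℝ) (2 ^ d * M) with hKdef
  have h2dM : (0:ℝ) < 2 ^ d * M := by positivity
  have hKpos : (0:ℝ) < K := lt_of_lt_of_le h2dM (le_max_right _ _)
  have hK2M : 2 ^ d * M ≤ K := le_max_right _ _
  have hK : ∀ u v : Fin d → ℝ, |φ u - φ v| ≤ K * ‖u - v‖ := by
    intro u v
    have h1 := hK0.dist_le_mul u v
    rw [Real.dist_eq, dist_eq_norm] at h1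
    exact h1.trans (mul_le_mul_of_nonneg_right (le_max_left _ _) (norm_nonneg _))
  set a : ℝ := (d:ℝ) / ((d:ℝ) + 1) with hadef
  have hd1pos : (0:ℝ) < (d:ℝ) + 1 := by positivity
  have ha0 : 0 ≤ a := by positivity
  have ha1 : a < 1 := by
    rw [hadef, div_lt_one hd1pos]; linarith
  have h1a : 1 - a = ((d:ℝ) + 1)⁻¹ := by
    rw [hadef]; field_simp; ring
  refine ⟨ENNReal.ofReal (3 ^ d * K ^ a * (2 ^ d * M) ^ (1 - a) * ((d:ℝ) + 1)),
    ENNReal.ofReal_ne_top, ?_⟩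
  intro c s hs f hf hsupp hmean hbound
  set l1 : ℝ := 2 ^ d * M / s ^ d with hl1def
  have hl1pos : 0 < l1 := by positivity
  rw [outerLp, if_neg ENNReal.one_ne_top]
  simp only [ENNReal.toReal_one, sub_self, Real.rpow_zero, mul_one, ENNReal.ofReal_one,
    one_mul, inv_one, ENNReal.rpow_one]
  rw [← Ioc_union_Ioi_eq_Ioi hl1pos.le,
    lintegral_union measurableSet_Ioi Ioc_disjoint_Ioi_same]
  have hsecond : (∫⁻ l in Ioi l1, superLevel (boxOuter d) (uhsMeasure d) ∞
      (fun w => ENNReal.ofReal |∫ x, f x * w.2 ^ (-(d:ℝ)) * φ (w.2⁻¹ • (w.1 - x))|)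
      (ENNReal.ofReal l)) = 0 := by
    rw [setLIntegral_congr_fun measurableSet_Ioi (fun l (hl : l1 < l) =>
      superLevel_zero_of_large d φ M hM hφsupp s hs f hbound l hl.le)]
    simp
  rw [hsecond, add_zero]
  -- main estimate on (0, l1]
  have hfirst : (∫⁻ l in Ioc 0 l1, superLevel (boxOuter d) (uhsMeasure d) ∞
      (fun w => ENNReal.ofReal |∫ x, f x * w.2 ^ (-(d:ℝ)) * φ (w.2⁻¹ • (w.1 - x))|)
      (ENNReal.ofReal l)) ≤
      ∫⁻ l in Ioc 0 l1, ENNReal.ofReal (3 ^ d * (K * s) ^ a) * ENNReal.ofReal (l ^ (-a)) := by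
    apply lintegral_mono_ae
    rw [ae_restrict_iff' measurableSet_Ioc]
    apply ae_of_all
    rintro l ⟨hl0, hll1⟩
    set L : ℝ := (K * s / l) ^ (((d:ℝ)+1)⁻¹) with hLdef
    have hKsl : 0 < K * s / l := by positivity
    have hLpos : 0 < L := Real.rpow_pos_of_pos hKsl _
    have hsL : s ≤ L := by
      have h1 : s ^ ((d:ℝ) + 1) ≤ K * s / l := by
        have e1 : s ^ ((d:ℝ) + 1) = s ^ d * s := by
          rw [show ((d:ℝ) + 1) = ((d + 1 : ℕ) : ℝ) by push_cast; ring,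
            Real.rpow_natCast, pow_succ]
        have e2 : K * s / l1 = (K / (2 ^ d * M)) * (s ^ d * s) := by
          rw [hl1def]; field_simp
        have e3 : s ^ d * s ≤ K * s / l1 := by
          rw [e2]
          exact le_mul_of_one_le_left (by positivity) ((one_le_div h2dM).2 hK2M)
        have e4 : K * s / l1 ≤ K * s / l :=
          div_le_div_of_nonneg_left (by positivity) hl0 hll1
        rw [e1]; exact e3.trans e4
      calc s = (s ^ ((d:ℝ) + 1)) ^ (((d:ℝ) + 1)⁻¹) := by
            rw [← Real.rpow_mul hs.le, mul_inv_cancel₀ (ne_of_gt hd1pos), Real.rpow_one]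
        _ ≤ L := Real.rpow_le_rpow (by positivity) h1 (by positivity)
    refine (superLevel_le_box d φ hφc M K hM hKpos hK hφsupp c s hs f hf hsupp hmean hbound
      l hl0).trans ?_
    rw [← ENNReal.ofReal_mul (by positivity)]
    apply ENNReal.ofReal_le_ofReal
    have h3L : (s + 2 * L) ^ d ≤ (3 * L) ^ d :=
      pow_le_pow_left₀ (by positivity) (by linarith) _
    refine h3L.trans (le_of_eq ?_)
    rw [mul_pow]
    have hLd : L ^ d = (K * s) ^ a * l ^ (-a) := by
      rw [hLdef, ← Real.rpow_natCast ((K * s / l) ^ (((d:ℝ)+1)⁻¹)) d, ← Real.rpow_mul hKsl.le]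
      have : ((d:ℝ) + 1)⁻¹ * (d:ℝ) = a := by rw [hadef, inv_mul_eq_div]
      rw [this, Real.div_rpow (by positivity) hl0.le, Real.rpow_neg hl0.le, div_eq_mul_inv]
    rw [hLd]; ring
  refine (le_trans hfirst ?_)
  rw [lintegral_const_mul' _ _ ENNReal.ofReal_ne_top]
  -- evaluate the rpow integral
  have hIntOn : IntegrableOn (fun l : ℝ => l ^ (-a)) (Ioc 0 l1) volume := by
    have := (intervalIntegral.intervalIntegrable_rpow' (a := 0) (b := l1)
      (by linarith : (-1:ℝ) < -a))
    rwa [intervalIntegrable_iff, uIoc_of_le hl1pos.le] at this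
  have hval : (∫⁻ l in Ioc 0 l1, ENNReal.ofReal (l ^ (-a))) =
      ENNReal.ofReal (l1 ^ (1 - a) * ((d:ℝ) + 1)) := by
    have hnn : (0 : ℝ → ℝ) ≤ᵐ[volume.restrict (Ioc (0:ℝ) l1)] fun l : ℝ => l ^ (-a) := by
      rw [Filter.EventuallyLE, ae_restrict_iff' measurableSet_Ioc]
      exact ae_of_all _ fun l hl => Real.rpow_nonneg hl.1.le _
    rw [← ofReal_integral_eq_lintegral_ofReal hIntOn hnn]
    congr 1
    rw [← intervalIntegral.integral_of_le hl1pos.le,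
      integral_rpow (Or.inl (by linarith : (-1:ℝ) < -a)),
      Real.zero_rpow (by linarith : -a + 1 ≠ 0)]
    rw [show -a + 1 = 1 - a by ring, h1a]
    rw [sub_zero, div_eq_mul_inv, inv_inv]
  rw [hval, ← ENNReal.ofReal_mul (by positivity)]
  apply ENNReal.ofReal_le_ofReal
  apply le_of_eq
  -- final real computation
  have e1 : (K * s) ^ a = K ^ a * s ^ a := Real.mul_rpow hKpos.le hs.le
  have e2 : l1 ^ (1 - a) = (2 ^ d * M) ^ (1 - a) / s ^ a := by
    rw [hl1def, Real.div_rpow (by positivity) (by positivity)]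
    congr 1
    rw [← Real.rpow_natCast s d, ← Real.rpow_mul hs.le]
    congr 1
    rw [h1a, hadef]
    field_simp
  rw [e1, e2]
  have hsa : s ^ a ≠ 0 := by positivity
  field_simp

end
end
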